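/- Let x be an infinite word. Then x is rich if and only if for each non-empty palindromic factor p of x, every complete return to p in x is a palindrome. -/

import Mathlib

/-- The finset of (distinct) palindromic factors of a finite word `w`,
including the empty word. -/
def palFactors {A : Type*} [DecidableEq A] (w : List A) : Finset (List A) :=
  ((w.inits.flatMap List.tails).filter (fun u => u.reverse = u)).toFinset

/-- A finite word `w` is rich if it has exactly `|w| + 1` distinct palindromic factors. -/
def Rich {A : Type*} [DecidableEq A] (w : List A) : Prop :=
  (palFactors w).card = w.length + 1

/-- A finite word `u` is a factor of the infinite word `x : ℕ → A` if it occurs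
at some position `i` in `x`. -/
def FactorOfInf {A : Type*} (u : List A) (x : ℕ → A) : Prop :=
  ∃ i : ℕ, u = (List.range u.length).map fun k => x (i + k)

/-- An infinite word is rich if all of its factors are rich. -/
def RichInf {A : Type*} [DecidableEq A] (x : ℕ → A) : Prop :=
  ∀ u : List A, FactorOfInf u x → Rich u

/-- `r` is a complete return to `u` if `u` is both a prefix and a suffix of `r`
and `r` has exactly two occurrences of `u`. -/
def CompleteReturn {A : Type*} (u r : List A) : Prop :=
  u <+: r ∧ u <:+ r ∧ {st : List A × List A | r = st.1 ++ u ++ st.2}.ncard = 2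

/-!
Appending a letter to a finite word `w` creates at most one new palindromic factor, the
longest palindromic suffix `q` of `wa`; so `wa` is rich iff `w` is rich and `q` does not occur
in `w`.

If a rich word `r` is a complete return to a palindrome `p`, the longest palindromic suffix
`q` of `r` is unioccurrent in `r`. Being a palindromic suffix of `r`, `p` is a suffix and hence
a prefix of `q`; so if `q ≠ r`, either `p = q` occurs twice in `r`, or `p` occurs a third time
in `r`, as a prefix of `q`. Conversely, if `q` occurs in `w`, the shortest suffix of `wa`
that starts with `q` and is longer than `q` is a complete return to `q`, hence a palindromic
suffix of `wa` longer than `q`.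
-/

theorem Set.ncard_eq_two_iff_subset_pair {α : Type*} {S : Set α} {a b : α} (hab : a ≠ b)
    (ha : a ∈ S) (hb : b ∈ S) : S.ncard = 2 ↔ S ⊆ {a, b} := by
  have hpair : {a, b} ⊆ S := Set.insert_subset_iff.2 ⟨ha, Set.singleton_subset_iff.2 hb⟩
  refine ⟨fun h => ?_, fun h => by rw [h.antisymm hpair, Set.ncard_pair hab]⟩
  exact (Set.eq_of_subset_of_ncard_le hpair (by rw [h, Set.ncard_pair hab])
    (Set.finite_of_ncard_ne_zero (by omega))).ge

section
variable {A : Type*}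

theorem map_range_add (x : ℕ → A) (i m n : ℕ) :
    (List.range (m + n)).map (fun k => x (i + k)) =
      (List.range m).map (fun k => x (i + k)) ++
        (List.range n).map (fun k => x (i + m + k)) := by
  simp [List.range_add, Function.comp_def, Nat.add_assoc]

theorem FactorOfInf.of_infix {x : ℕ → A} {u v : List A} (hv : FactorOfInf v x)
    (h : u <:+: v) : FactorOfInf u x := by
  obtain ⟨i, hi⟩ := hv
  obtain ⟨s, t, rfl⟩ := h
  refine ⟨i + s.length, ?_⟩
  simp only [List.length_append, map_range_add] at hi
  exact (List.append_inj (List.append_inj hi (by simp)).1 (by simp)).2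

theorem isPrefix_of_isSuffix_of_palindromes {p q : List A} (hp : p.reverse = p)
    (hq : q.reverse = q) (h : p <:+ q) : p <+: q := by
  rw [← hp, ← hq]
  exact List.reverse_prefix.mpr h

theorem infix_of_prefix_of_suffix_concat {u q w : List A} {a : A} (hu : u <+: q)
    (hq : q <:+ w ++ [a]) (hlt : u.length < q.length) : u <:+: w := by
  obtain ⟨t, rfl⟩ := hu
  obtain ⟨s, hs⟩ := hq
  have ht : t ≠ [] := by rintro rfl; simp at hlt
  refine ⟨s, t.dropLast, ?_⟩
  have := congrArg List.dropLast hs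
  rwa [List.dropLast_concat, ← List.append_assoc, List.dropLast_append_of_ne_nil ht] at this

def IsLongestPalSuffix (q w : List A) : Prop :=
  q <:+ w ∧ q.reverse = q ∧ ∀ p, p <:+ w → p.reverse = p → p.length ≤ q.length

theorem exists_isLongestPalSuffix (w : List A) : ∃ q, IsLongestPalSuffix q w := by
  classical
  obtain ⟨q, hq, hmax⟩ := (w.tails.toFinset.filter fun p => p.reverse = p).exists_max_image
    List.length ⟨[], by simp⟩
  simp only [Finset.mem_filter, List.mem_toFinset, List.mem_tails] at hq hmax
  exact ⟨q, hq.1, hq.2, fun p hp hpal => hmax p ⟨hp, hpal⟩⟩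

theorem IsLongestPalSuffix.ne_nil {q w : List A} {a : A}
    (hq : IsLongestPalSuffix q (w ++ [a])) : q ≠ [] := by
  have := hq.2.2 [a] (List.suffix_append w [a]) rfl
  rintro rfl
  simp at this

section palFactors
variable [DecidableEq A]

theorem mem_palFactors {w u : List A} :
    u ∈ palFactors w ↔ u <:+: w ∧ u.reverse = u := by
  simp only [palFactors, List.mem_toFinset, List.mem_filter, List.mem_flatMap,
    List.mem_inits, List.mem_tails, decide_eq_true_eq]
  constructor
  · rintro ⟨⟨p, hp, hu⟩, hpal⟩
    exact ⟨hu.isInfix.trans hp.isInfix, hpal⟩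
  · rintro ⟨⟨s, t, rfl⟩, hpal⟩
    exact ⟨⟨s ++ u, List.prefix_append _ _, List.suffix_append _ _⟩, hpal⟩

theorem palFactors_nil : palFactors ([] : List A) = {[]} := rfl

theorem palFactors_append_singleton {w q : List A} {a : A}
    (hq : IsLongestPalSuffix q (w ++ [a])) :
    palFactors (w ++ [a]) = insert q (palFactors w) := by
  obtain ⟨hqsuf, hqpal, hmax⟩ := hq
  ext u
  simp only [Finset.mem_insert, mem_palFactors, List.infix_concat_iff]
  constructor
  · rintro ⟨hu | hu, hpal⟩
    · have hle := hmax u hu hpal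
      have husuf : u <:+ q := List.suffix_of_suffix_length_le hu hqsuf hle
      obtain heq | hlt := hle.eq_or_lt
      · exact .inl (husuf.eq_of_length heq)
      · exact .inr ⟨infix_of_prefix_of_suffix_concat
          (isPrefix_of_isSuffix_of_palindromes hpal hqpal husuf) hqsuf hlt, hpal⟩
    · exact .inr ⟨hu, hpal⟩
  · rintro (rfl | ⟨hu, hpal⟩)
    · exact ⟨.inl hqsuf, hqpal⟩
    · exact ⟨.inr hu, hpal⟩

theorem card_palFactors_le (w : List A) : (palFactors w).card ≤ w.length + 1 := by
  induction w using List.reverseRecOn with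
  | nil => simp [palFactors_nil]
  | append_singleton w a ih =>
    obtain ⟨q, hq⟩ := exists_isLongestPalSuffix (w ++ [a])
    rw [palFactors_append_singleton hq, List.length_append, List.length_singleton]
    exact (Finset.card_insert_le _ _).trans (by omega)

theorem rich_nil : Rich ([] : List A) := rfl

theorem rich_append_singleton_iff {w q : List A} {a : A}
    (hq : IsLongestPalSuffix q (w ++ [a])) :
    Rich (w ++ [a]) ↔ Rich w ∧ q ∉ palFactors w := by
  have hle := card_palFactors_le w
  unfold Rich
  rw [palFactors_append_singleton hq, List.length_append, List.length_singleton]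
  by_cases hmem : q ∈ palFactors w
  · simp only [Finset.insert_eq_of_mem hmem, hmem, not_true_eq_false, and_false, iff_false]
    omega
  · simp only [Finset.card_insert_of_notMem hmem, hmem, not_false_eq_true, and_true]
    omega

end palFactors

theorem completeReturn_iff {u r : List A} :
    CompleteReturn u r ↔ u <+: r ∧ u <:+ r ∧ u.length < r.length ∧
      ∀ s t, r = s ++ u ++ t → s = [] ∨ t = [] := by
  refine and_congr_right fun hpre => and_congr_right fun hsuf => ?_
  obtain ⟨t₀, rfl⟩ := hpre
  obtain ⟨s₀, hs₀⟩ := hsuf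
  set S := {st : List A × List A | u ++ t₀ = st.1 ++ u ++ st.2}
  obtain rfl | ht₀ := eq_or_ne t₀ []
  · have hsub : S ⊆ {([], [])} := by
      rintro ⟨s, t⟩ h
      have := congrArg List.length h
      simp only [List.length_append, List.length_nil] at this
      simp only [Set.mem_singleton_iff, Prod.mk.injEq, ← List.length_eq_zero_iff]
      omega
    have := Set.ncard_le_ncard hsub
    simp only [Set.ncard_singleton, List.append_nil, lt_self_iff_false, false_and,
      iff_false] at this ⊢
    omega
  have hfst : ∀ {t}, ([], t) ∈ S ↔ t = t₀ := by simp [S, eq_comm]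
  have hsnd : ∀ {s}, (s, []) ∈ S ↔ s = s₀ := by
    intro s
    simp only [S, Set.mem_ofPred_eq, List.append_nil, ← hs₀]
    exact ⟨fun h => (List.append_cancel_right h).symm, fun h => h ▸ rfl⟩
  rw [Set.ncard_eq_two_iff_subset_pair (by simp [ht₀]) (hfst.2 rfl) (hsnd.2 rfl)]
  refine ⟨fun h => ⟨by simpa [List.length_pos_iff] using ht₀, fun s t hst => ?_⟩, ?_⟩
  · rcases h (show (s, t) ∈ S from hst) with h | h <;> simp only [Set.mem_singleton_iff, Prod.mk.injEq] at h
    exacts [.inl h.1, .inr h.2]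
  · rintro ⟨-, honly⟩ ⟨s, t⟩ hst
    rcases honly s t hst with rfl | rfl
    · rw [hfst.1 hst]; exact Set.mem_insert _ _
    · rw [hsnd.1 hst]; exact Set.mem_insert_of_mem _ rfl

theorem exists_completeReturn_suffix {u r : List A} (hpre : u <+: r) (hsuf : u <:+ r)
    (hlt : u.length < r.length) : ∃ r', r' <:+ r ∧ CompleteReturn u r' := by
  induction h : r.length using Nat.strong_induction_on generalizing r with
  | _ n ih =>
    by_cases honly : ∀ s t, r = s ++ u ++ t → s = [] ∨ t = []
    · exact ⟨r, List.suffix_refl r, completeReturn_iff.2 ⟨hpre, hsuf, hlt, honly⟩⟩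
    push Not at honly
    obtain ⟨s, t, rfl, hs, ht⟩ := honly
    have hsuf' : u ++ t <:+ s ++ u ++ t := ⟨s, (List.append_assoc _ _ _).symm⟩
    obtain ⟨r', hr', hret⟩ := ih (u ++ t).length
      (by simpa [← h, List.length_pos_iff] using hs) (List.prefix_append u t)
      (List.suffix_of_suffix_length_le hsuf hsuf' (by simp))
      (by simpa [List.length_pos_iff] using ht) rfl
    exact ⟨r', hr'.trans hsuf', hret⟩

section Rich
variable [DecidableEq A]

theorem reverse_eq_of_completeReturn_of_rich {p r : List A} (hr : Rich r)
    (hppal : p.reverse = p) (hret : CompleteReturn p r) : r.reverse = r := by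
  obtain ⟨hpre, hsuf, hlt, honly⟩ := completeReturn_iff.1 hret
  obtain ⟨w, a, rfl⟩ : ∃ w a, r = w ++ [a] := by
    simpa using (List.eq_nil_or_concat r).resolve_left (by rintro rfl; simp at hlt)
  obtain ⟨q, hq⟩ := exists_isLongestPalSuffix (w ++ [a])
  have hnew : q ∉ palFactors w := ((rich_append_singleton_iff hq).1 hr).2
  obtain ⟨hqsuf, hqpal, hmax⟩ := hq
  have hpq : p <:+ q := List.suffix_of_suffix_length_le hsuf hqsuf (hmax p hsuf hppal)
  obtain hqr | hqr := hqsuf.length_le.eq_or_lt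
  · rw [← hqsuf.eq_of_length hqr, hqpal]
  exfalso
  obtain hpq' | hpq' := hpq.length_le.eq_or_lt
  · obtain rfl := hpq.eq_of_length hpq'
    exact hnew (mem_palFactors.2
      ⟨infix_of_prefix_of_suffix_concat hpre (List.suffix_refl _) hlt, hppal⟩)
  · obtain ⟨t, rfl⟩ := isPrefix_of_isSuffix_of_palindromes hppal hqpal hpq
    obtain ⟨s, hs⟩ := hqsuf
    rcases honly s t (by rw [← hs, List.append_assoc]) with rfl | rfl
    · rw [List.nil_append] at hs
      simp [hs] at hqr
    · simp at hpq'

theorem rich_of_forall_completeReturn {w : List A}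
    (H : ∀ p r, r <:+: w → p ≠ [] → p.reverse = p → CompleteReturn p r → r.reverse = r) :
    Rich w := by
  induction w using List.reverseRecOn with
  | nil => exact rich_nil
  | append_singleton w a ih =>
    obtain ⟨q, hq⟩ := exists_isLongestPalSuffix (w ++ [a])
    have hq₀ := hq.ne_nil
    refine (rich_append_singleton_iff hq).2
      ⟨ih fun p r hr => H p r (hr.trans (List.infix_append [] w [a])), fun hmem => ?_⟩
    obtain ⟨hqsuf, hqpal, hmax⟩ := hq
    obtain ⟨⟨s, t, rfl⟩, -⟩ := mem_palFactors.1 hmem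
    have hsuf : q ++ t ++ [a] <:+ s ++ q ++ t ++ [a] := ⟨s, by simp⟩
    obtain ⟨r, hr, hret⟩ := exists_completeReturn_suffix (by simp)
      (List.suffix_of_suffix_length_le hqsuf hsuf (by simp)) (by simp)
    have hrsuf := hr.trans hsuf
    have hle := hmax r hrsuf (H q r hrsuf.isInfix hq₀ hqpal hret)
    have hlt := (completeReturn_iff.1 hret).2.2.1
    omega

end Rich

end

/-- An infinite word `x` is rich if and only if for each non-empty palindromic factor
`p` of `x`, every complete return to `p` in `x` is a palindrome. -/
theorem richInf_iff_complete_returns_palindromic {A : Type*} [DecidableEq A]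
    (x : ℕ → A) :
    RichInf x ↔ ∀ p : List A, FactorOfInf p x → p ≠ [] → p.reverse = p →
      ∀ r : List A, FactorOfInf r x → CompleteReturn p r → r.reverse = r :=
  ⟨fun hx _ _ _ hpal r hr hret => reverse_eq_of_completeReturn_of_rich (hx r hr) hpal hret,
    fun H _ hu => rich_of_forall_completeReturn fun p r hr hp hpal hret =>
      H p ((hu.of_infix hr).of_infix hret.1.isInfix) hp hpal r (hu.of_infix hr) hret⟩
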